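/- arXiv:2508.04590 — 4 statements merged into one kernel-verified Lean document; each statement's English description precedes it below -/
import Mathlib

section
/- In the SEIR model with measurement y = I, if the total population satisfies S + E + I + R = 1 and βεy ≠ 0 at a time t, then R(t) is expressible as 1 - y - (ẏ + γy)/ε - (ÿ + (ε+γ)ẏ + εγy)/(βεy) evaluated at t. -/
/-! The measurement determines the hidden compartments: the equation for `İ` gives
`E = (ẏ + γy)/ε`, differentiating it once more and substituting `Ė` gives
`S = (ÿ + (ε+γ)ẏ + εγy)/(βεy)`, and the conservation law then yields `R = 1 - y - E - S`. -/

section SEIR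

variable {β ε γ : ℝ} {S E I : ℝ → ℝ}

lemma seir_deriv_infected (hI : ∀ t, HasDerivAt I (ε * E t - γ * I t) t) :
    deriv I = fun t => ε * E t - γ * I t :=
  funext fun t => (hI t).deriv

lemma seir_hasDerivAt_deriv_infected
    (hE : ∀ t, HasDerivAt E (β * S t * I t - ε * E t) t)
    (hI : ∀ t, HasDerivAt I (ε * E t - γ * I t) t) (t : ℝ) :
    HasDerivAt (deriv I) (ε * (β * S t * I t - ε * E t) - γ * (ε * E t - γ * I t)) t := by
  rw [seir_deriv_infected hI]
  exact ((hE t).const_mul ε).sub ((hI t).const_mul γ)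

lemma seir_exposed_eq (hε : ε ≠ 0) (hI : ∀ t, HasDerivAt I (ε * E t - γ * I t) t) (t : ℝ) :
    E t = (deriv I t + γ * I t) / ε := by
  rw [(hI t).deriv, eq_div_iff hε]
  ring

lemma seir_susceptible_eq
    (hE : ∀ t, HasDerivAt E (β * S t * I t - ε * E t) t)
    (hI : ∀ t, HasDerivAt I (ε * E t - γ * I t) t) (t : ℝ) (ht : β * ε * I t ≠ 0) :
    S t = (deriv (deriv I) t + (ε + γ) * deriv I t + ε * γ * I t) / (β * ε * I t) := by
  rw [(seir_hasDerivAt_deriv_infected hE hI t).deriv, (hI t).deriv, eq_div_iff ht]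
  ring

end SEIR

theorem seir_R_from_measurement_general
    (β ε γ : ℝ) (S E I R : ℝ → ℝ)
    (hE : ∀ t, HasDerivAt E (β * S t * I t - ε * E t) t)
    (hI : ∀ t, HasDerivAt I (ε * E t - γ * I t) t)
    (hsum : ∀ t, S t + E t + I t + R t = 1)
    (t : ℝ) (ht : β * ε * I t ≠ 0) :
    R t = 1 - I t - (deriv I t + γ * I t) / ε
        - (deriv (deriv I) t + (ε + γ) * deriv I t + ε * γ * I t)
          / (β * ε * I t) := by
  have hε : ε ≠ 0 := right_ne_zero_of_mul (left_ne_zero_of_mul ht)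
  linarith [hsum t, seir_exposed_eq hε hI t, seir_susceptible_eq hE hI t ht]

theorem seir_R_from_measurement
    (β ε γ : ℝ) (S E I R : ℝ → ℝ)
    (hε : ε ≠ 0) (hβ : β ≠ 0)
    (hS : ∀ t, HasDerivAt S (-β * S t * I t) t)
    (hE : ∀ t, HasDerivAt E (β * S t * I t - ε * E t) t)
    (hI : ∀ t, HasDerivAt I (ε * E t - γ * I t) t)
    (hR : ∀ t, HasDerivAt R (γ * I t) t)
    (hsum : ∀ t, S t + E t + I t + R t = 1)
    (t : ℝ) (ht : β * ε * I t ≠ 0) :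
    R t = 1 - I t - (deriv I t + γ * I t) / ε
        - (deriv (deriv I) t + (ε + γ) * deriv I t + ε * γ * I t)
          / (β * ε * I t) :=
  seir_R_from_measurement_general β ε γ S E I R hE hI hsum t ht
end

section
/- In the SICRD model with r = μ = 1/20 and measurement y = I, the state C satisfies 10βp·C·y² - 10ÿ·y + 10ẏ² - 10β·ẏ·y² - 10q·ẏ·y - β·y³ - q·y² = 0. -/
theorem sicrd_C_algebraic_relation
    (β p q : ℝ) (S I C : ℝ → ℝ)
    (hS : ∀ t, HasDerivAt S (-β * S t * I t - q * S t + p * C t) t)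
    (hI : ∀ t, HasDerivAt I (β * S t * I t - (1 / 10) * I t) t) :
    ∀ t : ℝ,
      10 * β * p * C t * (I t) ^ 2 - 10 * deriv (deriv I) t * I t
        + 10 * (deriv I t) ^ 2 - 10 * β * deriv I t * (I t) ^ 2
        - 10 * q * deriv I t * I t - β * (I t) ^ 3 - q * (I t) ^ 2 = 0 := by
  intro t
  have hd : deriv I = fun s => β * S s * I s - (1 / 10) * I s :=
    funext fun s => (hI s).deriv
  have h2 : HasDerivAt (deriv I)
      ((β * (-β * S t * I t - q * S t + p * C t)) * I t
        + (β * S t) * (β * S t * I t - (1 / 10) * I t)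
        - (1 / 10) * (β * S t * I t - (1 / 10) * I t)) t := by
    rw [hd]
    exact ((((hS t).const_mul β).mul (hI t)).sub ((hI t).const_mul (1 / 10)))
  have h2' := h2.deriv
  rw [h2', hd]
  simp only
  ring
end

section
/- In the SICRD model with r = μ = 1/20 and measurement y = I, if β p y(t)² ≠ 0 then C(t) = (10ÿy - 10ẏ² + 10βẏy² + 10qẏy + βy³ + qy²)/(10βpy²) evaluated at t. -/
theorem deriv_deriv_infected_eq {β γ s' t : ℝ} {S I : ℝ → ℝ}
    (hS : HasDerivAt S s' t) (hI : ∀ u, HasDerivAt I (β * S u * I u - γ * I u) u) :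
    deriv (deriv I) t = β * (s' * I t + S t * deriv I t) - γ * deriv I t := by
  have hderiv : deriv I = fun u => β * S u * I u - γ * I u := funext fun u => (hI u).deriv
  rw [hderiv]
  simpa only [mul_assoc] using (((hS.fun_mul (hI t)).const_mul β).fun_sub ((hI t).const_mul γ)).deriv

/-- Eliminating `S` between `İ` and `Ï`: since `I ≠ 0`, the first equation gives `β S I = İ + I / 10`. -/
theorem sicrd_C_eq_of_derivs {β p q s i c d₁ d₂ : ℝ} (hβ : β ≠ 0) (hp : p ≠ 0) (hi : i ≠ 0)
    (hd₁ : d₁ = β * s * i - 1 / 10 * i)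
    (hd₂ : d₂ = β * ((-β * s * i - q * s + p * c) * i + s * d₁) - 1 / 10 * d₁) :
    c = (10 * d₂ * i - 10 * d₁ ^ 2 + 10 * β * d₁ * i ^ 2 + 10 * q * d₁ * i
        + β * i ^ 3 + q * i ^ 2) / (10 * β * p * i ^ 2) := by
  subst hd₁ hd₂
  field_simp
  ring

theorem sicrd_C_algebraically_observable
    (β p q : ℝ) (S I C : ℝ → ℝ)
    (hS : ∀ t, HasDerivAt S (-β * S t * I t - q * S t + p * C t) t)
    (hI : ∀ t, HasDerivAt I (β * S t * I t - (1 / 10) * I t) t)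
    (hβ : β ≠ 0) (hp : p ≠ 0) (t : ℝ) (ht : I t ≠ 0) :
    C t = (10 * deriv (deriv I) t * I t - 10 * (deriv I t) ^ 2
        + 10 * β * deriv I t * (I t) ^ 2 + 10 * q * deriv I t * I t
        + β * (I t) ^ 3 + q * (I t) ^ 2) / (10 * β * p * (I t) ^ 2) :=
  sicrd_C_eq_of_derivs hβ hp ht (hI t).deriv (deriv_deriv_infected_eq (hS t) hI)
end

section
/- In the SAIRD model, if ξ ≠ 0 and u(t)(10ξẏ(t) + (β+ξ)y(t)) ≠ 0, then S(t) = (100ÿ + 20ẏ + y)/(100ξẏu + 10(β+ξ)yu) evaluated at t. -/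
theorem saird_S_algebraically_observable
    (β ξ : ℝ) (u : ℝ → ℝ) (S A I : ℝ → ℝ)
    (hA : ∀ t, HasDerivAt A
      (β * u t * S t * I t + ξ * u t * S t * A t - (1 / 10) * A t) t)
    (hI : ∀ t, HasDerivAt I ((1 / 10) * A t - (1 / 10) * I t) t)
    (hξ : ξ ≠ 0) (t : ℝ)
    (ht : u t * (10 * ξ * deriv I t + (β + ξ) * I t) ≠ 0) :
    S t = (100 * deriv (deriv I) t + 20 * deriv I t + I t)
        / (100 * ξ * deriv I t * u t + 10 * (β + ξ) * I t * u t) := by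
  have hdI : deriv I = fun s => (1 / 10) * A s - (1 / 10) * I s := by
    funext s; exact (hI s).deriv
  have h2 : HasDerivAt (deriv I)
      ((1 / 10) * (β * u t * S t * I t + ξ * u t * S t * A t - (1 / 10) * A t)
        - (1 / 10) * ((1 / 10) * A t - (1 / 10) * I t)) t := by
    rw [hdI]
    exact ((hA t).const_mul _).sub ((hI t).const_mul _)
  have hdd := h2.deriv
  rw [hdd, (hI t).deriv]
  rw [(hI t).deriv] at ht
  have hden : 100 * ξ * ((1 / 10) * A t - (1 / 10) * I t) * u t
      + 10 * (β + ξ) * I t * u t ≠ 0 := by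
    intro h; apply ht; nlinarith [h]
  rw [eq_div_iff hden]
  ring
end
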